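/- Let Ω be a bounded Lipschitz domain in ℝ^N, 0 < s < 1, and let ω ∈ C(Ω) ∩ L^r(Ω) for some r > 1 satisfy ω > 0 in Ω, ∫_Ω ω dx = 1, and K_ε := ess sup_{0 ≤ t ≤ ε} ∫_{δ^{-1}{t}} ω dH_{N-1} < ∞ for some ε > 0. Let v_s be the unique nonnegative minimizer of |·|_s on M_s, extended as zero outside Ω, and μ_s := inf{|u|_s : u ∈ M_s}. Then v_s > 0 in Ω and v_s is a viscosity solution of L_∞^- u + μ_s = 0 in Ω with u = 0 in ℝ^N∖Ω. -/

import Mathlib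

open MeasureTheory Metric Set Filter Topology
open scoped ENNReal NNReal

noncomputable section

/-- Euclidean space ℝ^N. -/
abbrev Euc (N : ℕ) := EuclideanSpace ℝ (Fin N)

variable {N : ℕ}

/-- Distance to the boundary of `Ω`. -/
def distBdry (Ω : Set (Euc N)) (x : Euc N) : ℝ := Metric.infDist x (frontier Ω)

/-- The β-Hölder seminorm `|u|_β` of `u` over the closure of `Ω`. -/
def holderSemi (β : ℝ) (Ω : Set (Euc N)) (u : Euc N → ℝ) : ℝ :=
  sSup {q : ℝ | ∃ x ∈ closure Ω, ∃ y ∈ closure Ω, x ≠ y ∧ q = |u x - u y| / dist x y ^ β}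

/-- Membership in `C_0^{0,β}(closure Ω)`: β-Hölder continuous on the closure of `Ω`
and vanishing on the boundary `∂Ω`. -/
def MemC0Holder (β : ℝ) (Ω : Set (Euc N)) (u : Euc N → ℝ) : Prop :=
  (∃ C : ℝ, ∀ x ∈ closure Ω, ∀ y ∈ closure Ω, |u x - u y| ≤ C * dist x y ^ β) ∧
  (∀ x ∈ frontier Ω, u x = 0)

/-- The p-th power `[u]_{s,p}^p` of the Gagliardo seminorm. -/
def gagliardo (N : ℕ) (s p : ℝ) (u : Euc N → ℝ) : ℝ≥0∞ :=
  ∫⁻ x : Euc N, ∫⁻ y : Euc N,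
    ENNReal.ofReal (|u x - u y| ^ p / dist x y ^ ((N : ℝ) + s * p))

/-- Membership in the fractional Sobolev space `W_0^{s,p}(Ω)`. -/
def MemW0 (s p : ℝ) (Ω : Set (Euc N)) (u : Euc N → ℝ) : Prop :=
  MemLp u (ENNReal.ofReal p) volume ∧ (∀ᵐ x : Euc N, x ∉ Ω → u x = 0) ∧
  gagliardo N s p u < ⊤

/-- `∫_Ω (log|u|)⁺ ω dx` as an extended nonnegative real. -/
def logIntPos (Ω : Set (Euc N)) (ω u : Euc N → ℝ) : ℝ≥0∞ :=
  ∫⁻ x in Ω, ENNReal.ofReal (ω x) * ENNReal.ofReal (Real.log |u x|)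

/-- `∫_Ω (log|u|)⁻ ω dx` as an extended nonnegative real,
with the convention `log 0 = -∞`. -/
def logIntNeg (Ω : Set (Euc N)) (ω u : Euc N → ℝ) : ℝ≥0∞ :=
  ∫⁻ x in Ω, ENNReal.ofReal (ω x) *
    (if u x = 0 then ⊤ else ENNReal.ofReal (-Real.log |u x|))

/-- The extended-real integral `∫_Ω (log|u|) ω dx` (which may equal `-∞`). -/
def logInt (Ω : Set (Euc N)) (ω u : Euc N → ℝ) : EReal :=
  (logIntPos Ω ω u : EReal) - (logIntNeg Ω ω u : EReal)

/-- The exponential map `EReal → ℝ≥0∞`, with `exp (-∞) = 0` and `exp ∞ = ∞`. -/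
def expE (x : EReal) : ℝ≥0∞ :=
  if x = ⊥ then 0 else if x = ⊤ then ⊤ else ENNReal.ofReal (Real.exp x.toReal)

/-- `k(u) := exp (∫_Ω (log|u|) ω dx)`. -/
def kval (Ω : Set (Euc N)) (ω u : Euc N → ℝ) : ℝ≥0∞ := expE (logInt Ω ω u)

/-- `Λ_p := inf { [u]_{s,p}^p : u ∈ M_p }` where
`M_p = {u ∈ W_0^{s,p}(Ω) : ∫_Ω (log|u|) ω dx = 0}`. -/
def LambdaP (N : ℕ) (s p : ℝ) (Ω : Set (Euc N)) (ω : Euc N → ℝ) : ℝ≥0∞ :=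
  sInf {Λ : ℝ≥0∞ | ∃ u : Euc N → ℝ,
    MemW0 s p Ω u ∧ logInt Ω ω u = 0 ∧ Λ = gagliardo N s p u}

/-- Membership in `M_s := {u ∈ C_0^{0,s}(closure Ω) : k(u) = 1}`. -/
def MemMs (s : ℝ) (Ω : Set (Euc N)) (ω u : Euc N → ℝ) : Prop :=
  MemC0Holder s Ω u ∧ kval Ω ω u = 1

/-- `μ_s := inf {|u|_s : u ∈ M_s}`. -/
def muS (s : ℝ) (Ω : Set (Euc N)) (ω : Euc N → ℝ) : ℝ :=
  sInf {m : ℝ | ∃ u : Euc N → ℝ, MemMs s Ω ω u ∧ m = holderSemi s Ω u}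

/-- `K_ε := ess sup_{0 ≤ t ≤ ε} ∫_{δ^{-1}{t}} ω dH_{N-1}`. -/
def Keps (N : ℕ) (Ω : Set (Euc N)) (ω : Euc N → ℝ) (ε : ℝ) : ℝ≥0∞ :=
  essSup (fun t : ℝ =>
      ∫⁻ x in distBdry Ω ⁻¹' {t}, ENNReal.ofReal (ω x)
        ∂(MeasureTheory.Measure.hausdorffMeasure ((N : ℝ) - 1)))
    (volume.restrict (Icc (0 : ℝ) ε))

/-- `u` is a weak solution of `(-Δ_p)^s u = Λ u⁻¹ ω` in `Ω`. -/
def IsWeakSolution (N : ℕ) (s p : ℝ) (Ω : Set (Euc N)) (ω : Euc N → ℝ) (Λ : ℝ)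
    (u : Euc N → ℝ) : Prop :=
  ∀ φ : Euc N → ℝ, MemW0 s p Ω φ →
    (∫ x : Euc N, ∫ y : Euc N,
        |u x - u y| ^ (p - 2) * (u x - u y) * (φ x - φ y) / dist x y ^ ((N : ℝ) + s * p))
      = Λ * ∫ x in Ω, (u x)⁻¹ * φ x * ω x

/-- `(L_∞^+ u)(x) := sup_{y ≠ x} (u(y)-u(x))/|y-x|^s`. -/
def Lplus (s : ℝ) (u : Euc N → ℝ) (x : Euc N) : ℝ :=
  ⨆ y : {y : Euc N // y ≠ x}, (u y.1 - u x) / dist y.1 x ^ s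

/-- `(L_∞^- u)(x) := inf_{y ≠ x} (u(y)-u(x))/|y-x|^s`. -/
def Lminus (s : ℝ) (u : Euc N → ℝ) (x : Euc N) : ℝ :=
  ⨅ y : {y : Euc N // y ≠ x}, (u y.1 - u x) / dist y.1 x ^ s

/-- `u` is a viscosity supersolution of `L u = 0` in `Ω`. -/
def IsViscSupersol (Ω : Set (Euc N)) (L : (Euc N → ℝ) → Euc N → ℝ)
    (u : Euc N → ℝ) : Prop :=
  ∀ x₀ ∈ Ω, ∀ φ : Euc N → ℝ, ContDiff ℝ 1 φ → HasCompactSupport φ →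
    φ x₀ = u x₀ → (∀ x, φ x ≤ u x) → L φ x₀ ≤ 0

/-- `u` is a viscosity subsolution of `L u = 0` in `Ω`. -/
def IsViscSubsol (Ω : Set (Euc N)) (L : (Euc N → ℝ) → Euc N → ℝ)
    (u : Euc N → ℝ) : Prop :=
  ∀ x₀ ∈ Ω, ∀ φ : Euc N → ℝ, ContDiff ℝ 1 φ → HasCompactSupport φ →
    φ x₀ = u x₀ → (∀ x, u x ≤ φ x) → 0 ≤ L φ x₀

/-!
The minimizer is explicit: `v_s = μ_s δ^s` in `Ω`. Since `v_s` vanishes on `∂Ω` and has Hölder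
constant `μ_s`, it lies below `w := μ_s δ^s`; and `w` has Hölder constant at most `μ_s` as well,
because `δ` is 1-Lipschitz and `t ↦ t^s` is `s`-Hölder. Monotonicity of `k` gives `k(w) ≥ 1`, so
`w / k(w)` lies in `M_s` with seminorm at most `μ_s / k(w)`; minimality forces `k(w) = 1`, and
uniqueness gives `w = v_s`. Both viscosity inequalities can then be read off the formula: at `x₀`
the nearest boundary point realises the difference quotient `-μ_s`, while the global
`μ_s`-Hölder bound of `w` keeps every difference quotient above `-μ_s`.
-/

lemma abs_rpow_sub_rpow_le {a b s : ℝ} (ha : 0 ≤ a) (hb : 0 ≤ b) (hs0 : 0 ≤ s) (hs1 : s ≤ 1) :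
    |a ^ s - b ^ s| ≤ |a - b| ^ s := by
  wlog hba : b ≤ a generalizing a b
  · rw [abs_sub_comm, abs_sub_comm a]
    exact this hb ha (le_of_not_ge hba)
  have hsub : a ^ s ≤ (a - b) ^ s + b ^ s := by
    simpa using Real.rpow_add_le_add_rpow (sub_nonneg.2 hba) hb hs0 hs1
  rw [abs_of_nonneg (sub_nonneg.2 (Real.rpow_le_rpow hb hba hs0)),
    abs_of_nonneg (sub_nonneg.2 hba)]
  linarith

section HolderSeminorm

variable {β : ℝ} {Ω : Set (Euc N)} {u : Euc N → ℝ}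

lemma holderSemi_nonneg : 0 ≤ holderSemi β Ω u := by
  refine Real.sSup_nonneg ?_
  rintro q ⟨x, -, y, -, -, rfl⟩
  positivity

lemma holderSemi_le {C : ℝ} (hC : 0 ≤ C)
    (h : ∀ x ∈ closure Ω, ∀ y ∈ closure Ω, |u x - u y| ≤ C * dist x y ^ β) :
    holderSemi β Ω u ≤ C := by
  refine Real.sSup_le ?_ hC
  rintro q ⟨x, hx, y, hy, hxy, rfl⟩
  rw [div_le_iff₀ (Real.rpow_pos_of_pos (dist_pos.2 hxy) β)]
  exact h x hx y hy

lemma abs_sub_le_holderSemi_mul (hu : MemC0Holder β Ω u) {x y : Euc N} (hx : x ∈ closure Ω)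
    (hy : y ∈ closure Ω) : |u x - u y| ≤ holderSemi β Ω u * dist x y ^ β := by
  rcases eq_or_ne x y with rfl | hxy
  · rw [sub_self, abs_zero]
    exact mul_nonneg holderSemi_nonneg (Real.rpow_nonneg dist_nonneg β)
  obtain ⟨C, hC⟩ := hu.1
  have hbdd : BddAbove {q : ℝ | ∃ x ∈ closure Ω, ∃ y ∈ closure Ω, x ≠ y ∧
      q = |u x - u y| / dist x y ^ β} := by
    refine ⟨C, ?_⟩
    rintro q ⟨a, ha, b, hb, hab, rfl⟩
    rw [div_le_iff₀ (Real.rpow_pos_of_pos (dist_pos.2 hab) β)]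
    exact hC a ha b hb
  rw [← div_le_iff₀ (Real.rpow_pos_of_pos (dist_pos.2 hxy) β)]
  exact le_csSup hbdd ⟨x, hx, y, hy, hxy, rfl⟩

lemma holderSemi_eq_zero_of_subsingleton [Subsingleton (Euc N)] : holderSemi β Ω u = 0 := by
  rw [holderSemi, ← Real.sSup_empty]
  congr 1
  refine eq_empty_of_forall_notMem ?_
  rintro q ⟨x, -, y, -, hxy, -⟩
  exact hxy (Subsingleton.elim x y)

variable {ω : Euc N → ℝ}

lemma muS_le_holderSemi (hu : MemMs β Ω ω u) : muS β Ω ω ≤ holderSemi β Ω u := by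
  refine csInf_le ⟨0, ?_⟩ ⟨u, hu, rfl⟩
  rintro m ⟨w, -, rfl⟩
  exact holderSemi_nonneg

end HolderSeminorm

lemma expE_coe (x : ℝ) : expE x = ENNReal.ofReal (Real.exp x) := by
  rw [expE, if_neg (EReal.coe_ne_bot x), if_neg (EReal.coe_ne_top x), EReal.toReal_coe]

lemma expE_mono : Monotone expE := by
  intro a b hab
  induction a using EReal.rec with
  | bot => simp [expE]
  | top => rw [top_le_iff.1 hab]
  | coe a =>
    induction b using EReal.rec with
    | bot => exact absurd hab (by simp)
    | top => simp [expE]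
    | coe b =>
      rw [expE_coe, expE_coe]
      exact ENNReal.ofReal_le_ofReal (Real.exp_le_exp.2 (EReal.coe_le_coe_iff.1 hab))

section LogIntegral

variable {Ω : Set (Euc N)} {ω u w : Euc N → ℝ}

lemma logIntPos_mono (hΩ : MeasurableSet Ω) (h : ∀ x ∈ Ω, |u x| ≤ |w x|) :
    logIntPos Ω ω u ≤ logIntPos Ω ω w := by
  refine setLIntegral_mono' hΩ fun x hx => ?_
  rcases eq_or_ne (u x) 0 with hu | hu
  · simp [hu]
  · gcongr ENNReal.ofReal (ω x) * ENNReal.ofReal ?_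
    exact Real.log_le_log (abs_pos.2 hu) (h x hx)

lemma logIntNeg_anti (hΩ : MeasurableSet Ω) (h : ∀ x ∈ Ω, |u x| ≤ |w x|) :
    logIntNeg Ω ω w ≤ logIntNeg Ω ω u := by
  refine setLIntegral_mono' hΩ fun x hx => ?_
  rcases eq_or_ne (u x) 0 with hu | hu
  · rw [if_pos hu]
    gcongr
    exact le_top
  · have hw : w x ≠ 0 := abs_pos.1 ((abs_pos.2 hu).trans_le (h x hx))
    rw [if_neg hu, if_neg hw]
    gcongr ENNReal.ofReal (ω x) * ENNReal.ofReal (-?_)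
    exact Real.log_le_log (abs_pos.2 hu) (h x hx)

lemma kval_mono (hΩ : MeasurableSet Ω) (h : ∀ x ∈ Ω, |u x| ≤ |w x|) :
    kval Ω ω u ≤ kval Ω ω w :=
  expE_mono (EReal.sub_le_sub (EReal.coe_ennreal_le_coe_ennreal_iff.2 (logIntPos_mono hΩ h))
    (EReal.coe_ennreal_le_coe_ennreal_iff.2 (logIntNeg_anti hΩ h)))

lemma kval_eq_zero_of_logIntNeg_eq_top (h : logIntNeg Ω ω u = ⊤) : kval Ω ω u = 0 := by
  rw [kval, logInt, h, EReal.coe_ennreal_top, EReal.sub_top, expE, if_pos rfl]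

lemma exists_ne_zero_of_kval_ne_zero (hΩ : MeasurableSet Ω)
    (hω : ∫⁻ x in Ω, ENNReal.ofReal (ω x) ≠ 0) (hk : kval Ω ω u ≠ 0) : ∃ x ∈ Ω, u x ≠ 0 := by
  by_contra! hu
  refine hk (kval_eq_zero_of_logIntNeg_eq_top ?_)
  rw [logIntNeg, setLIntegral_congr_fun hΩ fun x hx => by rw [if_pos (hu x hx)], ← top_le_iff]
  calc ⊤ = (∫⁻ x in Ω, ENNReal.ofReal (ω x)) * ⊤ := (ENNReal.mul_top hω).symm
    _ ≤ _ := lintegral_mul_const_le _ _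

lemma logIntPos_eq_lintegral (hΩ : MeasurableSet Ω) (hω : ∀ x ∈ Ω, 0 ≤ ω x) :
    logIntPos Ω ω u = ∫⁻ x in Ω, ENNReal.ofReal (ω x * Real.log |u x|) :=
  setLIntegral_congr_fun hΩ fun x hx => (ENNReal.ofReal_mul (hω x hx)).symm

lemma logIntNeg_eq_lintegral (hΩ : MeasurableSet Ω) (hω : ∀ x ∈ Ω, 0 ≤ ω x)
    (hu : ∀ x ∈ Ω, u x ≠ 0) :
    logIntNeg Ω ω u = ∫⁻ x in Ω, ENNReal.ofReal (-(ω x * Real.log |u x|)) :=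
  setLIntegral_congr_fun hΩ fun x hx => by
    rw [if_neg (hu x hx), ← ENNReal.ofReal_mul (hω x hx), mul_neg]

lemma integrable_mul_log (hΩ : MeasurableSet Ω) (hω : ∀ x ∈ Ω, 0 ≤ ω x)
    (hu : ∀ x ∈ Ω, u x ≠ 0)
    (hm : AEStronglyMeasurable (fun x => ω x * Real.log |u x|) (volume.restrict Ω))
    (hP : logIntPos Ω ω u ≠ ⊤) (hN : logIntNeg Ω ω u ≠ ⊤) :
    Integrable (fun x => ω x * Real.log |u x|) (volume.restrict Ω) := by
  rw [logIntPos_eq_lintegral hΩ hω] at hP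
  rw [logIntNeg_eq_lintegral hΩ hω hu] at hN
  refine ⟨hm, ?_⟩
  rw [hasFiniteIntegral_def]
  calc ∫⁻ x in Ω, ‖ω x * Real.log |u x|‖ₑ
      ≤ ∫⁻ x in Ω, (ENNReal.ofReal (ω x * Real.log |u x|) +
          ENNReal.ofReal (-(ω x * Real.log |u x|))) := by
        refine lintegral_mono fun x => ?_
        rw [Real.enorm_eq_ofReal_abs, abs_eq_max_neg, ENNReal.ofReal_max]
        exact max_le (le_add_right le_rfl) (le_add_left le_rfl)
    _ = (∫⁻ x in Ω, ENNReal.ofReal (ω x * Real.log |u x|)) +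
          ∫⁻ x in Ω, ENNReal.ofReal (-(ω x * Real.log |u x|)) :=
        lintegral_add_left' hm.aemeasurable.ennreal_ofReal _
    _ < ⊤ := ENNReal.add_lt_top.2 ⟨hP.lt_top, hN.lt_top⟩

lemma integrable_mul_log_of_abs_le (hΩ : MeasurableSet Ω) (hω : ∀ x ∈ Ω, 0 ≤ ω x)
    (hωi : IntegrableOn ω Ω) (hwm : Measurable w) (hw : ∀ x ∈ Ω, w x ≠ 0) {C : ℝ}
    (hwC : ∀ x ∈ Ω, |w x| ≤ C) (huw : ∀ x ∈ Ω, |u x| ≤ |w x|) (hu : logIntNeg Ω ω u ≠ ⊤) :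
    Integrable (fun x => ω x * Real.log |w x|) (volume.restrict Ω) := by
  have hP : logIntPos Ω ω w ≠ ⊤ := by
    refine ne_top_of_le_ne_top ?_
      (logIntPos_mono hΩ (w := fun _ => C) fun x hx => (hwC x hx).trans (le_abs_self C))
    rw [logIntPos, lintegral_mul_const' _ _ ENNReal.ofReal_ne_top]
    exact ENNReal.mul_ne_top ((lintegral_ofReal_le_lintegral_enorm _).trans_lt hωi.2).ne
      ENNReal.ofReal_ne_top
  refine integrable_mul_log hΩ hω hw ?_ hP (ne_top_of_le_ne_top hu (logIntNeg_anti hΩ huw))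
  have hlog : Measurable fun x => Real.log |w x| := by fun_prop
  exact hωi.aestronglyMeasurable.mul hlog.aestronglyMeasurable

lemma kval_eq_ofReal_exp_integral (hΩ : MeasurableSet Ω) (hω : ∀ x ∈ Ω, 0 ≤ ω x)
    (hu : ∀ x ∈ Ω, u x ≠ 0)
    (hint : Integrable (fun x => ω x * Real.log |u x|) (volume.restrict Ω)) :
    kval Ω ω u = ENNReal.ofReal (Real.exp (∫ x in Ω, ω x * Real.log |u x|)) := by
  have hP : logIntPos Ω ω u ≠ ⊤ := by
    rw [logIntPos_eq_lintegral hΩ hω]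
    exact ((lintegral_ofReal_le_lintegral_enorm _).trans_lt hint.2).ne
  have hN : logIntNeg Ω ω u ≠ ⊤ := by
    rw [logIntNeg_eq_lintegral hΩ hω hu]
    exact ((lintegral_ofReal_le_lintegral_enorm _).trans_lt hint.neg.2).ne
  rw [integral_eq_lintegral_pos_part_sub_lintegral_neg_part hint, ← logIntPos_eq_lintegral hΩ hω,
    ← logIntNeg_eq_lintegral hΩ hω hu, kval, logInt, ← EReal.coe_ennreal_toReal hP,
    ← EReal.coe_ennreal_toReal hN, ← EReal.coe_sub, expE_coe]

lemma kval_const_mul (hΩ : MeasurableSet Ω) (hω : ∀ x ∈ Ω, 0 ≤ ω x) (hωi : IntegrableOn ω Ω)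
    (hω1 : ∫ x in Ω, ω x = 1) (hu : ∀ x ∈ Ω, u x ≠ 0)
    (hint : Integrable (fun x => ω x * Real.log |u x|) (volume.restrict Ω)) {c : ℝ} (hc : 0 < c) :
    kval Ω ω (fun x => c * u x) = ENNReal.ofReal c * kval Ω ω u := by
  have hlog : EqOn (fun x => ω x * Real.log |c * u x|)
      (fun x => Real.log c * ω x + ω x * Real.log |u x|) Ω := fun x hx => by
    simp only
    rw [abs_mul, abs_of_pos hc, Real.log_mul hc.ne' (abs_pos.2 (hu x hx)).ne']
    ring
  have hint' : Integrable (fun x => ω x * Real.log |c * u x|) (volume.restrict Ω) :=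
    ((hωi.const_mul (Real.log c)).add hint).congr
      (ae_restrict_of_forall_mem hΩ fun x hx => (hlog hx).symm)
  rw [kval_eq_ofReal_exp_integral hΩ hω (fun x hx => mul_ne_zero hc.ne' (hu x hx)) hint',
    kval_eq_ofReal_exp_integral hΩ hω hu hint, setIntegral_congr_fun hΩ hlog,
    integral_add (hωi.const_mul _) hint, integral_const_mul, hω1, mul_one, Real.exp_add,
    Real.exp_log hc, ENNReal.ofReal_mul hc.le]

end LogIntegral

lemma IsOpen.notMem_of_mem_frontier {X : Type*} [TopologicalSpace X] {s : Set X} {x : X}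
    (hs : IsOpen s) (hx : x ∈ frontier s) : x ∉ s :=
  disjoint_left.1 (disjoint_frontier_iff_isOpen.2 hs) hx

section DistBdry

variable {Ω : Set (Euc N)} {x y : Euc N}

lemma distBdry_nonneg : 0 ≤ distBdry Ω x := infDist_nonneg

lemma lipschitzWith_distBdry : LipschitzWith 1 (distBdry Ω) := lipschitz_infDist_pt _

lemma distBdry_le_dist (hx : x ∈ Ω) (hy : y ∉ Ω) : distBdry Ω x ≤ dist x y := by
  obtain ⟨z, hz, hzd⟩ :=
    exists_mem_frontier_infDist_compl_eq_dist hx ((ne_univ_iff_exists_notMem Ω).2 ⟨y, hy⟩)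
  calc distBdry Ω x ≤ dist x z := infDist_le_dist_of_mem hz
    _ = infDist x Ωᶜ := hzd.symm
    _ ≤ dist x y := infDist_le_dist_of_mem hy

lemma distBdry_pos (hΩ : IsOpen Ω) (hfr : (frontier Ω).Nonempty) (hx : x ∈ Ω) :
    0 < distBdry Ω x :=
  (isClosed_frontier.notMem_iff_infDist_pos hfr).1 fun h => hΩ.notMem_of_mem_frontier h hx

lemma exists_mem_frontier_distBdry_eq_dist (hΩ : Bornology.IsBounded Ω)
    (hfr : (frontier Ω).Nonempty) (x : Euc N) : ∃ z ∈ frontier Ω, distBdry Ω x = dist x z :=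
  (hΩ.isCompact_closure.of_isClosed_subset isClosed_frontier
    frontier_subset_closure).exists_infDist_eq_dist hfr x

end DistBdry

def barrier (μ s : ℝ) (Ω : Set (Euc N)) : Euc N → ℝ :=
  Ω.indicator fun x => μ * distBdry Ω x ^ s

section Barrier

variable {μ s : ℝ} {Ω : Set (Euc N)} {x y : Euc N}

lemma barrier_of_mem (hx : x ∈ Ω) : barrier μ s Ω x = μ * distBdry Ω x ^ s :=
  indicator_of_mem hx _

lemma barrier_of_notMem (hx : x ∉ Ω) : barrier μ s Ω x = 0 :=
  indicator_of_notMem hx _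

lemma barrier_pos (hΩ : IsOpen Ω) (hfr : (frontier Ω).Nonempty) (hμ : 0 < μ) (hx : x ∈ Ω) :
    0 < barrier μ s Ω x := by
  rw [barrier_of_mem hx]
  exact mul_pos hμ (Real.rpow_pos_of_pos (distBdry_pos hΩ hfr hx) s)

lemma measurable_barrier (hΩ : MeasurableSet Ω) : Measurable (barrier μ s Ω) := by
  have : Measurable (distBdry Ω) := lipschitzWith_distBdry.continuous.measurable
  exact (by fun_prop : Measurable fun x => μ * distBdry Ω x ^ s).indicator hΩ

lemma abs_barrier_sub_le_of_mem (hμ : 0 ≤ μ) (hs0 : 0 ≤ s) (hs1 : s ≤ 1) (hx : x ∈ Ω)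
    (y : Euc N) : |barrier μ s Ω x - barrier μ s Ω y| ≤ μ * dist x y ^ s := by
  by_cases hy : y ∈ Ω
  · rw [barrier_of_mem hx, barrier_of_mem hy, ← mul_sub, abs_mul, abs_of_nonneg hμ]
    gcongr
    calc |distBdry Ω x ^ s - distBdry Ω y ^ s| ≤ |distBdry Ω x - distBdry Ω y| ^ s :=
          abs_rpow_sub_rpow_le distBdry_nonneg distBdry_nonneg hs0 hs1
      _ ≤ dist x y ^ s := by
          gcongr
          simpa [Real.dist_eq] using lipschitzWith_distBdry.dist_le_mul x y
  · rw [barrier_of_mem hx, barrier_of_notMem hy, sub_zero,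
      abs_of_nonneg (mul_nonneg hμ (Real.rpow_nonneg distBdry_nonneg s))]
    exact mul_le_mul_of_nonneg_left
      (Real.rpow_le_rpow distBdry_nonneg (distBdry_le_dist hx hy) hs0) hμ

lemma abs_barrier_sub_le (hμ : 0 ≤ μ) (hs0 : 0 ≤ s) (hs1 : s ≤ 1) (x y : Euc N) :
    |barrier μ s Ω x - barrier μ s Ω y| ≤ μ * dist x y ^ s := by
  by_cases hx : x ∈ Ω
  · exact abs_barrier_sub_le_of_mem hμ hs0 hs1 hx y
  by_cases hy : y ∈ Ω
  · rw [abs_sub_comm, dist_comm]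
    exact abs_barrier_sub_le_of_mem hμ hs0 hs1 hy x
  · rw [barrier_of_notMem hx, barrier_of_notMem hy, sub_self, abs_zero]
    positivity

lemma exists_ne_barrier_sub_eq (hΩ : IsOpen Ω) (hΩb : Bornology.IsBounded Ω)
    (hfr : (frontier Ω).Nonempty) (hx : x ∈ Ω) :
    ∃ y ≠ x, barrier μ s Ω y - barrier μ s Ω x = -(μ * dist y x ^ s) := by
  obtain ⟨z, hz, hzd⟩ := exists_mem_frontier_distBdry_eq_dist hΩb hfr x
  have hzΩ := hΩ.notMem_of_mem_frontier hz
  refine ⟨z, fun h => hzΩ (h ▸ hx), ?_⟩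
  rw [barrier_of_notMem hzΩ, barrier_of_mem hx, hzd, dist_comm, zero_sub]

end Barrier

section Minimizer

lemma setLIntegral_ofReal_eq_one {Ω : Set (Euc N)} {ω : Euc N → ℝ} (hΩ : MeasurableSet Ω)
    (hω0 : ∀ x ∈ Ω, 0 ≤ ω x) (hωi : IntegrableOn ω Ω) (hω1 : ∫ x in Ω, ω x = 1) :
    ∫⁻ x in Ω, ENNReal.ofReal (ω x) = 1 := by
  rw [← ofReal_integral_eq_lintegral_ofReal hωi (ae_restrict_of_forall_mem hΩ hω0), hω1,
    ENNReal.ofReal_one]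

variable {Ω : Set (Euc N)} {s : ℝ} {ω v : Euc N → ℝ}

lemma abs_le_muS_mul_distBdry (hΩ : Bornology.IsBounded Ω) (hfr : (frontier Ω).Nonempty)
    (hv : MemMs s Ω ω v) (hv_min : holderSemi s Ω v = muS s Ω ω) {x : Euc N} (hx : x ∈ Ω) :
    |v x| ≤ muS s Ω ω * distBdry Ω x ^ s := by
  obtain ⟨z, hz, hzd⟩ := exists_mem_frontier_distBdry_eq_dist hΩ hfr x
  have := abs_sub_le_holderSemi_mul hv.1 (subset_closure hx) (frontier_subset_closure hz)
  rwa [hv.1.2 z hz, sub_zero, hv_min, ← hzd] at this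

lemma muS_pos (hΩm : MeasurableSet Ω) (hΩ : Bornology.IsBounded Ω)
    (hfr : (frontier Ω).Nonempty) (hω : ∫⁻ x in Ω, ENNReal.ofReal (ω x) ≠ 0)
    (hv : MemMs s Ω ω v) (hv_min : holderSemi s Ω v = muS s Ω ω) : 0 < muS s Ω ω := by
  obtain ⟨x, hx, hvx⟩ := exists_ne_zero_of_kval_ne_zero hΩm hω (hv.2 ▸ one_ne_zero)
  exact pos_of_mul_pos_left ((abs_pos.2 hvx).trans_le (abs_le_muS_mul_distBdry hΩ hfr hv hv_min hx))
    (Real.rpow_nonneg distBdry_nonneg s)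

lemma eq_of_abs_le_of_holder (hΩ : IsOpen Ω) (hω0 : ∀ x ∈ Ω, 0 ≤ ω x) (hωi : IntegrableOn ω Ω)
    (hω1 : ∫ x in Ω, ω x = 1) (hv : MemMs s Ω ω v)
    (hv_unique : ∀ w : Euc N → ℝ, MemMs s Ω ω w → (∀ x, 0 ≤ w x) →
      (∀ x ∉ Ω, w x = 0) → holderSemi s Ω w = muS s Ω ω → w = v)
    (hμ : 0 < muS s Ω ω) {w : Euc N → ℝ}
    (hw : ∀ x y, |w x - w y| ≤ muS s Ω ω * dist x y ^ s) (hw_pos : ∀ x ∈ Ω, 0 < w x)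
    (hw0 : ∀ x ∉ Ω, w x = 0) (hvw : ∀ x ∈ Ω, |v x| ≤ w x)
    (hint : Integrable (fun x => ω x * Real.log |w x|) (volume.restrict Ω)) : w = v := by
  set μ := muS s Ω ω
  have hwne : ∀ x ∈ Ω, w x ≠ 0 := fun x hx => (hw_pos x hx).ne'
  have hkw := kval_eq_ofReal_exp_integral hΩ.measurableSet hω0 hwne hint
  set t := ∫ x in Ω, ω x * Real.log |w x|
  have ht : 0 ≤ t := by
    have hk := kval_mono (ω := ω) hΩ.measurableSet fun x hx => (hvw x hx).trans (le_abs_self _)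
    rwa [hv.2, hkw, ← ENNReal.ofReal_one, ENNReal.ofReal_le_ofReal_iff (Real.exp_pos t).le,
      Real.one_le_exp_iff] at hk
  -- rescaling `w` by `c = k(w)⁻¹` puts it in `M_s` without increasing its Hölder constant
  set c := Real.exp (-t)
  have hc0 : 0 < c := Real.exp_pos _
  have hc1 : c ≤ 1 := Real.exp_le_one_iff.2 (neg_nonpos.2 ht)
  have hcw : ∀ x ∈ closure Ω, ∀ y ∈ closure Ω, |c * w x - c * w y| ≤ c * μ * dist x y ^ s :=
    fun x _ y _ => by
      rw [← mul_sub, abs_mul, abs_of_pos hc0, mul_assoc]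
      exact mul_le_mul_of_nonneg_left (hw x y) hc0.le
  have hM : MemMs s Ω ω (fun x => c * w x) := by
    refine ⟨⟨⟨c * μ, hcw⟩, fun x hx => ?_⟩, ?_⟩
    · simp [hw0 x (hΩ.notMem_of_mem_frontier hx)]
    · rw [kval_const_mul hΩ.measurableSet hω0 hωi hω1 hwne hint hc0, hkw,
        ← ENNReal.ofReal_mul hc0.le, ← Real.exp_add, neg_add_cancel, Real.exp_zero,
        ENNReal.ofReal_one]
  have hle : holderSemi s Ω (fun x => c * w x) ≤ c * μ := holderSemi_le (by positivity) hcw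
  have hge : μ ≤ holderSemi s Ω (fun x => c * w x) := muS_le_holderSemi hM
  have hc : c = 1 := le_antisymm hc1 (le_of_mul_le_mul_right (by linarith) hμ)
  have hw_nn : ∀ x, 0 ≤ w x := fun x => by
    by_cases hx : x ∈ Ω
    · exact (hw_pos x hx).le
    · exact (hw0 x hx).ge
  simpa [hc] using hv_unique _ hM (fun x => mul_nonneg hc0.le (hw_nn x))
    (fun x hx => by simp [hw0 x hx]) (le_antisymm (hle.trans_eq (by rw [hc, one_mul])) hge)

lemma eq_barrier (hΩ : IsOpen Ω) (hΩb : Bornology.IsBounded Ω) (hfr : (frontier Ω).Nonempty)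
    (hs0 : 0 ≤ s) (hs1 : s ≤ 1) (hω0 : ∀ x ∈ Ω, 0 ≤ ω x) (hωi : IntegrableOn ω Ω)
    (hω1 : ∫ x in Ω, ω x = 1) (hv : MemMs s Ω ω v) (hv_min : holderSemi s Ω v = muS s Ω ω)
    (hv_unique : ∀ w : Euc N → ℝ, MemMs s Ω ω w → (∀ x, 0 ≤ w x) →
      (∀ x ∉ Ω, w x = 0) → holderSemi s Ω w = muS s Ω ω → w = v) :
    v = barrier (muS s Ω ω) s Ω := by
  have hμ := muS_pos hΩ.measurableSet hΩb hfr
    (by simp [setLIntegral_ofReal_eq_one hΩ.measurableSet hω0 hωi hω1]) hv hv_min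
  have hw := abs_barrier_sub_le (Ω := Ω) hμ.le hs0 hs1
  have hvw : ∀ x ∈ Ω, |v x| ≤ barrier (muS s Ω ω) s Ω x := fun x hx => by
    rw [barrier_of_mem hx]
    exact abs_le_muS_mul_distBdry hΩb hfr hv hv_min hx
  obtain ⟨z, hz⟩ := hfr
  obtain ⟨R, hR⟩ := hΩb.subset_closedBall z
  have hwR : ∀ x ∈ Ω, |barrier (muS s Ω ω) s Ω x| ≤ muS s Ω ω * R ^ s := fun x hx => by
    have := hw x z
    rw [barrier_of_notMem (hΩ.notMem_of_mem_frontier hz), sub_zero] at this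
    exact this.trans (by gcongr; exact hR hx)
  refine (eq_of_abs_le_of_holder hΩ hω0 hωi hω1 hv hv_unique hμ hw
    (fun x hx => barrier_pos hΩ ⟨z, hz⟩ hμ hx) (fun x hx => barrier_of_notMem hx) hvw ?_).symm
  refine integrable_mul_log_of_abs_le hΩ.measurableSet hω0 hωi (measurable_barrier hΩ.measurableSet)
    (fun x hx => (barrier_pos hΩ ⟨z, hz⟩ hμ hx).ne') hwR
    (fun x hx => (hvw x hx).trans (le_abs_self _)) ?_
  exact mt kval_eq_zero_of_logIntNeg_eq_top (hv.2 ▸ one_ne_zero)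

end Minimizer

lemma ContDiff.exists_holderWith_of_hasCompactSupport {E : Type*} [NormedAddCommGroup E]
    [NormedSpace ℝ E] {φ : E → ℝ} (hφ : ContDiff ℝ 1 φ)
    (hc : HasCompactSupport φ) {r : ℝ≥0} (hr : r ≤ 1) : ∃ C, HolderWith C r φ := by
  obtain ⟨K, hK⟩ := hφ.lipschitzWith_of_hasCompactSupport hc one_ne_zero
  obtain ⟨M, hM⟩ := hc.exists_bound_of_continuous hφ.continuous
  have hbdd : HolderWith (2 * M).toNNReal 0 φ := fun x y => by
    rw [NNReal.coe_zero, ENNReal.rpow_zero, mul_one, edist_dist]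
    refine ENNReal.ofReal_le_ofReal ((dist_le_norm_add_norm _ _).trans ?_)
    linarith [hM x, hM y]
  exact ⟨_, hbdd.of_le_of_le (holderWith_one.2 hK) zero_le hr⟩

section Viscosity

variable {Ω : Set (Euc N)} {s μ : ℝ} {u φ : Euc N → ℝ} {x : Euc N}

lemma Lminus_le (hφ : ContDiff ℝ 1 φ) (hc : HasCompactSupport φ) (hs0 : 0 ≤ s) (hs1 : s ≤ 1)
    {y : Euc N} (hy : y ≠ x) : Lminus s φ x ≤ (φ y - φ x) / dist y x ^ s := by
  obtain ⟨C, hC⟩ := hφ.exists_holderWith_of_hasCompactSupport hc (Real.toNNReal_le_one.2 hs1)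
  refine ciInf_le ⟨-(C : ℝ), ?_⟩ (⟨y, hy⟩ : {y // y ≠ x})
  rintro q ⟨⟨y', hy'⟩, rfl⟩
  have := hC.dist_le y' x
  rw [Real.coe_toNNReal _ hs0, Real.dist_eq] at this
  rw [le_div_iff₀ (Real.rpow_pos_of_pos (dist_pos.2 hy') s)]
  linarith [neg_abs_le (φ y' - φ x)]

lemma Lminus_of_subsingleton [Subsingleton (Euc N)] : Lminus s φ x = 0 := by
  have : IsEmpty {y // y ≠ x} := ⟨fun y => y.2 (Subsingleton.elim _ _)⟩
  exact Real.iInf_of_isEmpty _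

lemma isViscSupersol_Lminus (hs0 : 0 ≤ s) (hs1 : s ≤ 1)
    (h : ∀ x ∈ Ω, ∃ y ≠ x, u y - u x ≤ -(μ * dist y x ^ s)) :
    IsViscSupersol Ω (fun φ x => Lminus s φ x + μ) u := by
  intro x hx φ hφ hc hφx hφu
  obtain ⟨y, hy, hyx⟩ := h x hx
  have : (φ y - φ x) / dist y x ^ s ≤ -μ := by
    rw [div_le_iff₀ (Real.rpow_pos_of_pos (dist_pos.2 hy) s)]
    linarith [hφu y]
  linarith [Lminus_le hφ hc hs0 hs1 hy]

lemma isViscSubsol_Lminus [Nontrivial (Euc N)] (h : ∀ x ∈ Ω, ∀ y, u x - u y ≤ μ * dist x y ^ s) :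
    IsViscSubsol Ω (fun φ x => Lminus s φ x + μ) u := by
  intro x hx φ _ _ hφx hφu
  have : Nonempty {y // y ≠ x} := nonempty_subtype.2 (exists_ne x)
  have : -μ ≤ Lminus s φ x := le_ciInf fun ⟨y, hy⟩ => by
    rw [le_div_iff₀ (Real.rpow_pos_of_pos (dist_pos.2 hy) s), dist_comm]
    linarith [hφu y, h x hx y]
  linarith

end Viscosity

theorem vs_viscosity_solution_general
    (N : ℕ) (Ω : Set (Euc N)) (hΩo : IsOpen Ω) (hΩb : Bornology.IsBounded Ω)
    (s : ℝ) (hs0 : 0 < s) (hs1 : s < 1)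
    (ω : Euc N → ℝ) (hω_pos : ∀ x ∈ Ω, 0 < ω x)
    (hω_Lr : ∃ r : ℝ, 1 < r ∧ MemLp ω (ENNReal.ofReal r) (volume.restrict Ω))
    (hω_norm : ∫ x in Ω, ω x = 1)
    (v : Euc N → ℝ) (hv : MemMs s Ω ω v) (hv_nn : ∀ x, 0 ≤ v x)
    (hv_min : holderSemi s Ω v = muS s Ω ω)
    (hv_unique : ∀ w : Euc N → ℝ, MemMs s Ω ω w → (∀ x, 0 ≤ w x) →
      (∀ x ∉ Ω, w x = 0) → holderSemi s Ω w = muS s Ω ω → w = v) :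
    (∀ x ∈ Ω, 0 < v x) ∧
    IsViscSupersol Ω (fun φ x => Lminus s φ x + muS s Ω ω) v ∧
    IsViscSubsol Ω (fun φ x => Lminus s φ x + muS s Ω ω) v := by
  have hω0 : ∀ x ∈ Ω, 0 ≤ ω x := fun x hx => (hω_pos x hx).le
  have : IsFiniteMeasure (volume.restrict Ω) := isFiniteMeasure_restrict.2 hΩb.measure_lt_top.ne
  obtain ⟨r, hr, hωr⟩ := hω_Lr
  have hωi : IntegrableOn ω Ω := hωr.integrable (ENNReal.one_le_ofReal.2 hr.le)
  have hmass : ∫⁻ x in Ω, ENNReal.ofReal (ω x) ≠ 0 := by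
    simp [setLIntegral_ofReal_eq_one hΩo.measurableSet hω0 hωi hω_norm]
  rcases subsingleton_or_nontrivial (Euc N) with hN | hN
  · have hμ : muS s Ω ω = 0 := hv_min ▸ holderSemi_eq_zero_of_subsingleton
    refine ⟨fun x hx => ?_, fun x _ φ _ _ _ _ => by simp [Lminus_of_subsingleton, hμ],
      fun x _ φ _ _ _ _ => by simp [Lminus_of_subsingleton, hμ]⟩
    obtain ⟨y, -, hy⟩ := exists_ne_zero_of_kval_ne_zero hΩo.measurableSet hmass (hv.2 ▸ one_ne_zero)
    exact (hv_nn x).lt_of_ne (Subsingleton.elim y x ▸ hy).symm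
  · have hΩne : Ω.Nonempty := nonempty_iff_ne_empty.2 (by rintro rfl; simp at hω_norm)
    have hfr : (frontier Ω).Nonempty :=
      nonempty_frontier_iff.2 ⟨hΩne, fun h => NormedSpace.unbounded_univ ℝ (Euc N) (h ▸ hΩb)⟩
    have hμ := muS_pos hΩo.measurableSet hΩb hfr hmass hv hv_min
    rw [eq_barrier hΩo hΩb hfr hs0.le hs1.le hω0 hωi hω_norm hv hv_min hv_unique]
    refine ⟨fun x hx => barrier_pos hΩo hfr hμ hx, ?_, ?_⟩
    · exact isViscSupersol_Lminus hs0.le hs1.le fun x hx =>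
        (exists_ne_barrier_sub_eq hΩo hΩb hfr hx).imp fun y hy => ⟨hy.1, hy.2.le⟩
    · exact isViscSubsol_Lminus fun x _ y =>
        (le_abs_self _).trans (abs_barrier_sub_le hμ.le hs0.le hs1.le x y)

/-- The unique nonnegative minimizer `v_s` of `|·|_s` on `M_s`, extended
by zero outside `Ω`, is strictly positive in `Ω` and is a viscosity solution of
`L_∞^- u + μ_s = 0` in `Ω` with `u = 0` in `ℝ^N ∖ Ω`. -/
theorem vs_viscosity_solution
    (N : ℕ) (Ω : Set (Euc N)) (hΩo : IsOpen Ω) (hΩb : Bornology.IsBounded Ω)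
    (hΩc : IsConnected Ω)
    (s : ℝ) (hs0 : 0 < s) (hs1 : s < 1)
    (ω : Euc N → ℝ) (hω_cont : ContinuousOn ω Ω) (hω_pos : ∀ x ∈ Ω, 0 < ω x)
    (hω_Lr : ∃ r : ℝ, 1 < r ∧ MemLp ω (ENNReal.ofReal r) (volume.restrict Ω))
    (hω_norm : ∫ x in Ω, ω x = 1)
    (hK : ∃ ε > (0 : ℝ), Keps N Ω ω ε < ⊤)
    (v : Euc N → ℝ) (hv : MemMs s Ω ω v) (hv_nn : ∀ x, 0 ≤ v x)
    (hv0 : ∀ x ∉ Ω, v x = 0) (hv_min : holderSemi s Ω v = muS s Ω ω)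
    (hv_unique : ∀ w : Euc N → ℝ, MemMs s Ω ω w → (∀ x, 0 ≤ w x) →
      (∀ x ∉ Ω, w x = 0) → holderSemi s Ω w = muS s Ω ω → w = v) :
    (∀ x ∈ Ω, 0 < v x) ∧
    IsViscSupersol Ω (fun φ x => Lminus s φ x + muS s Ω ω) v ∧
    IsViscSubsol Ω (fun φ x => Lminus s φ x + muS s Ω ω) v :=
  vs_viscosity_solution_general N Ω hΩo hΩb s hs0 hs1 ω hω_pos hω_Lr hω_norm v hv hv_nn hv_min
    hv_unique
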